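/- arXiv:1908.11731 — 7 statements merged into one kernel-verified Lean document; each statement's English description precedes it below -/
import Mathlib

section
/- Let L be a first-order language with at most countably many symbols and let K be a class of finitely generated L-structures (closed under isomorphism). Then there exists a countable ultrahomogeneous L-structure M whose age equals K if and only if K is nonempty, has only countably many members up to isomorphism, is closed under passing to finitely generated substructures, has the joint embedding property, and has the amalgamation property. -/
open FirstOrder FirstOrder.Language FirstOrder.Language.Structure

universe u v w

/-! Necessity is `IsUltrahomogeneous.age_isFraisse`. For sufficiency, enumerate `K` up to
isomorphism as `ρ 0, ρ 1, …` and build a chain `A 0 ↪ A 1 ↪ ⋯` in `K` whose stage `n + 1`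
absorbs `ρ n` (joint embedding) and solves one extension problem `ρ i ↪ ρ j`, `ρ i ↪ A k`
(amalgamation). Each stage has only countably many such problems, so dovetailing along
`Nat.pair` solves every one of them at some later stage. The direct limit of the chain then has
age `K` and extends embeddings along every inclusion of members of its age, which for a countable
structure gives ultrahomogeneity by back-and-forth. -/

namespace FirstOrder.Language

open CategoryTheory Substructure

variable {L : Language.{u, v}}

theorem DirectLimit.exists_comp_eq_of_fg {ι : Type*} [Preorder ι] [IsDirectedOrder ι]
    [Nonempty ι] {G : ι → Type w} [∀ i, L.Structure (G i)] {f : ∀ i j, i ≤ j → G i ↪[L] G j}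
    [DirectedSystem G fun i j h => f i j h] {P : Type*} [L.Structure P] (hP : FG L P)
    (g : P ↪[L] DirectLimit G f) :
    ∃ i, ∃ g' : P ↪[L] G i, (DirectLimit.of L ι G f i).comp g' = g := by
  obtain ⟨i, T, hT⟩ := exists_fg_substructure_in_Sigma g.toHom.range (hP.range g.toHom)
  have hle : g.toHom.range ≤ (DirectLimit.of L ι G f i).toHom.range := by
    rw [← hT]
    rintro _ ⟨y, -, rfl⟩
    exact ⟨y, rfl⟩
  refine ⟨i, (DirectLimit.of L ι G f i).equivRange.symm.toEmbedding.comp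
    ((inclusion hle).comp g.equivRange.toEmbedding), Embedding.ext fun x => ?_⟩
  exact congr_arg Subtype.val ((DirectLimit.of L ι G f i).equivRange.apply_symm_apply
    (inclusion hle (g.equivRange x)))

theorem isUltrahomogeneous_of_forall_extend {M : Type w} [L.Structure M] (hM : CG L M)
    (h : ∀ P Q : Bundled.{w} L.Structure, P ∈ L.age M → Q ∈ L.age M →
      ∀ (e : P ↪[L] Q) (f : P ↪[L] M), ∃ g : Q ↪[L] M, g.comp e = f) :
    L.IsUltrahomogeneous M := by
  rw [isUltrahomogeneous_iff_IsExtensionPair hM]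
  rintro ⟨f, f_FG⟩ m
  let S := f.dom ⊔ closure L {m}
  have S_FG : S.FG := f_FG.sup (fg_closure_singleton m)
  obtain ⟨g, hg⟩ := h (Bundled.mk f.dom) (Bundled.mk S) (age.fg_substructure f_FG)
    (age.fg_substructure S_FG) (inclusion le_sup_left)
    ((subtype f.cod).comp f.toEquiv.toEmbedding)
  refine ⟨⟨⟨S, g.toHom.range, g.equivRange⟩, S_FG⟩,
    subset_closure.trans (le_sup_right : _ ≤ S) (Set.mem_singleton m), ⟨le_sup_left, ?_⟩⟩
  ext
  simp [S, ← hg]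

theorem exists_seq_forall_nonempty_equiv_of_countable_quotient
    {K : Set (Bundled.{w} L.Structure)} (hn : K.Nonempty) (hc : (Quotient.mk' '' K).Countable)
    (hiso : ∀ M N : Bundled.{w} L.Structure, Nonempty (M ≃[L] N) → (M ∈ K ↔ N ∈ K)) :
    ∃ ρ : ℕ → Bundled.{w} L.Structure, (∀ n, ρ n ∈ K) ∧ ∀ N ∈ K, ∃ n, Nonempty (ρ n ≃[L] N) := by
  obtain ⟨F, hF⟩ := hc.exists_eq_range (hn.image _)
  refine ⟨fun n => (F n).out, fun n => ?_, fun N hN => ?_⟩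
  · obtain ⟨P, hP, hPF⟩ : F n ∈ Quotient.mk' '' K := hF ▸ Set.mem_range_self n
    exact (hiso _ _ (Quotient.exact (((F n).out_eq).trans hPF.symm))).2 hP
  · obtain ⟨n, hn⟩ : Quotient.mk' N ∈ Set.range F := hF ▸ Set.mem_image_of_mem _ hN
    exact ⟨n, Quotient.exact (((F n).out_eq).trans hn)⟩

/-- The problem of extending `f` along `e`, for structures drawn from the enumeration `ρ`. -/
structure ExtensionProblem (ρ : ℕ → Bundled.{w} L.Structure) (A : Type*) [L.Structure A] where
  src : ℕ
  tgt : ℕ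
  e : ρ src ↪[L] ρ tgt
  f : ρ src ↪[L] A

namespace ExtensionProblem

variable {ρ : ℕ → Bundled.{w} L.Structure} {A B C : Type*} [L.Structure A] [L.Structure B]
  [L.Structure C]

def map (τ : ExtensionProblem ρ A) (g : A ↪[L] B) : ExtensionProblem ρ B :=
  ⟨τ.src, τ.tgt, τ.e, g.comp τ.f⟩

@[simp]
theorem map_map (τ : ExtensionProblem ρ A) (g : A ↪[L] B) (h : B ↪[L] C) :
    (τ.map g).map h = τ.map (h.comp g) :=
  rfl

@[simp]
theorem map_refl (τ : ExtensionProblem ρ A) : τ.map (Embedding.refl L A) = τ :=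
  rfl

theorem countable [Countable (Σ l, L.Functions l)] (hρ : ∀ n, FG L (ρ n)) [Countable A] :
    Countable (ExtensionProblem ρ A) := by
  have : ∀ n, Countable (ρ n) := fun n => cg_iff_countable.1 (hρ n).cg
  have : ∀ i j, Countable (ρ i ↪[L] ρ j) := fun i j => (hρ i).countable_embedding _
  have : ∀ i, Countable (ρ i ↪[L] A) := fun i => (hρ i).countable_embedding _
  let toSigma : ExtensionProblem ρ A ≃ Σ i j, (ρ i ↪[L] ρ j) × (ρ i ↪[L] A) :=
    ⟨fun τ => ⟨τ.src, τ.tgt, τ.e, τ.f⟩, fun x => ⟨x.1, x.2.1, x.2.2.1, x.2.2.2⟩,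
      fun _ => rfl, fun _ => rfl⟩
  exact toSigma.injective.countable

theorem nonempty_of_equiv {n : ℕ} (eA : ρ n ≃[L] A) : Nonempty (ExtensionProblem ρ A) :=
  ⟨⟨n, n, Embedding.refl L _, eA.toEmbedding⟩⟩

end ExtensionProblem

theorem exists_extensionProblem_step {K : Set (Bundled.{w} L.Structure)}
    {ρ : ℕ → Bundled.{w} L.Structure} (jep : JointEmbedding K) (ap : Amalgamation K)
    (hρ : ∀ n, ρ n ∈ K) {A : Bundled.{w} L.Structure} (hA : A ∈ K) (n : ℕ)
    (τ : ExtensionProblem ρ A) :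
    ∃ B ∈ K, ∃ g : A ↪[L] B, Nonempty (ρ n ↪[L] B) ∧
      ∃ h : ρ τ.tgt ↪[L] B, h.comp τ.e = g.comp τ.f := by
  obtain ⟨C, hC, ⟨u⟩, ⟨r⟩⟩ := jep A hA (ρ n) (hρ n)
  obtain ⟨B, g, h, hB, hgh⟩ := ap _ C _ (u.comp τ.f) τ.e (hρ τ.src) hC (hρ τ.tgt)
  exact ⟨B, hB, g.comp u, ⟨g.comp r⟩, h, by rw [← hgh, Embedding.comp_assoc]⟩

structure ChainStrategy (K : Set (Bundled.{w} L.Structure))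
    (ρ : ℕ → Bundled.{w} L.Structure) where
  start : K
  enum : ∀ A : K, ℕ → ExtensionProblem ρ A.1
  enum_surjective : ∀ A, Function.Surjective (enum A)
  step : ℕ → ∀ A : K, ExtensionProblem ρ A.1 → Σ B : K, A.1 ↪[L] B.1
  nonempty_embedding_step : ∀ n A τ, Nonempty (ρ n ↪[L] (step n A τ).1.1)
  step_solves : ∀ n A τ,
    ∃ h : ρ τ.tgt ↪[L] (step n A τ).1.1, h.comp τ.e = (step n A τ).2.comp τ.f

theorem exists_chainStrategy [Countable (Σ l, L.Functions l)] {K : Set (Bundled.{w} L.Structure)}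
    {ρ : ℕ → Bundled.{w} L.Structure} (hfg : ∀ M ∈ K, FG L M) (jep : JointEmbedding K)
    (ap : Amalgamation K) (hρ : ∀ n, ρ n ∈ K) (hρK : ∀ N ∈ K, ∃ n, Nonempty (ρ n ≃[L] N)) :
    Nonempty (ChainStrategy K ρ) := by
  have hsurj : ∀ A : K, ∃ en : ℕ → ExtensionProblem ρ A.1, Function.Surjective en := by
    rintro ⟨A, hA⟩
    obtain ⟨n, ⟨eA⟩⟩ := hρK A hA
    have := ExtensionProblem.nonempty_of_equiv eA
    have : Countable A := cg_iff_countable.1 (hfg A hA).cg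
    have := ExtensionProblem.countable (A := A) fun n => hfg _ (hρ n)
    exact exists_surjective_nat _
  choose enum henum using hsurj
  choose B hB g hρB h hh using fun n (A : K) => exists_extensionProblem_step jep ap hρ A.2 n
  exact ⟨⟨⟨ρ 0, hρ 0⟩, enum, henum, fun n A τ => ⟨⟨B n A τ, hB n A τ⟩, g n A τ⟩,
    hρB, fun n A τ => ⟨h n A τ, hh n A τ⟩⟩⟩

namespace ChainStrategy

variable {K : Set (Bundled.{w} L.Structure)} {ρ : ℕ → Bundled.{w} L.Structure}
  (S : ChainStrategy K ρ)

/-- Stage `n` of the chain, with the problem scheduled at each time `t`. The problems over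
stage `n` are listed at the times `t` with `t.unpair.1 = n`, all of which are `≥ n`, and are
carried along the chain until their time comes. -/
def state : ℕ → Σ A : K, ℕ → ExtensionProblem ρ A.1
  | 0 => ⟨S.start, fun t => S.enum S.start t.unpair.2⟩
  | n + 1 =>
    let B := S.step n (state n).1 ((state n).2 n)
    ⟨B.1, fun t => if t.unpair.1 = n + 1 then S.enum B.1 t.unpair.2 else ((state n).2 t).map B.2⟩

def stage (n : ℕ) : Bundled.{w} L.Structure :=
  (S.state n).1.1

def schedule (n : ℕ) : ℕ → ExtensionProblem ρ (S.stage n) :=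
  (S.state n).2

def stageMap (n : ℕ) : S.stage n ↪[L] S.stage (n + 1) :=
  (S.step n (S.state n).1 (S.schedule n n)).2

abbrev chainMap : ∀ m n, m ≤ n → S.stage m ↪[L] S.stage n :=
  DirectedSystem.natLERec S.stageMap

abbrev limit : Type w :=
  DirectLimit (fun n => S.stage n) S.chainMap

theorem chainMap_self (n : ℕ) : S.chainMap n n le_rfl = Embedding.refl L _ :=
  Nat.leRecOn_self _

theorem chainMap_succ {m n : ℕ} (h : m ≤ n) :
    S.chainMap m (n + 1) (h.trans n.le_succ) = (S.stageMap n).comp (S.chainMap m n h) :=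
  Nat.leRecOn_succ h _

theorem stage_mem (n : ℕ) : S.stage n ∈ K :=
  (S.state n).1.2

theorem nonempty_embedding_stage_succ (n : ℕ) : Nonempty (ρ n ↪[L] S.stage (n + 1)) :=
  S.nonempty_embedding_step n _ _

theorem schedule_succ_of_ne {n t : ℕ} (ht : t.unpair.1 ≠ n + 1) :
    S.schedule (n + 1) t = (S.schedule n t).map (S.stageMap n) :=
  if_neg ht

theorem schedule_pair (n l : ℕ) : S.schedule n (Nat.pair n l) = S.enum (S.state n).1 l := by
  cases n <;> simp only [schedule, state, Nat.unpair_pair, if_true] <;> rfl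

theorem schedule_eq_map {s t u : ℕ} (hts : t.unpair.1 ≤ s) (hsu : s ≤ u) :
    S.schedule u t = (S.schedule s t).map (S.chainMap s u hsu) := by
  induction u, hsu using Nat.le_induction with
  | base => rw [chainMap_self, ExtensionProblem.map_refl]
  | succ u hsu ih =>
    rw [S.schedule_succ_of_ne (by omega), ih, ExtensionProblem.map_map, chainMap_succ]

theorem exists_schedule_eq (n : ℕ) (τ : ExtensionProblem ρ (S.stage n)) :
    ∃ t, ∃ h : n ≤ t, S.schedule t t = τ.map (S.chainMap n t h) := by
  obtain ⟨l, hl⟩ := S.enum_surjective (S.state n).1 τ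
  refine ⟨Nat.pair n l, Nat.left_le_pair n l, ?_⟩
  rw [S.schedule_eq_map (by simp) (Nat.left_le_pair n l), schedule_pair, hl]

theorem exists_solution (n : ℕ) (τ : ExtensionProblem ρ (S.stage n)) :
    ∃ m, ∃ h : n ≤ m, ∃ w : ρ τ.tgt ↪[L] S.stage m,
      w.comp τ.e = (S.chainMap n m h).comp τ.f := by
  obtain ⟨t, hnt, ht⟩ := S.exists_schedule_eq n τ
  obtain ⟨w, hw⟩ : ∃ w : ρ (S.schedule t t).tgt ↪[L] S.stage (t + 1),
      w.comp (S.schedule t t).e = (S.stageMap t).comp (S.schedule t t).f :=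
    S.step_solves t _ _
  generalize S.schedule t t = σ at ht w hw
  subst ht
  refine ⟨t + 1, hnt.trans t.le_succ, w, ?_⟩
  rw [S.chainMap_succ hnt, Embedding.comp_assoc]
  exact hw

theorem countable_limit [Countable (Σ l, L.Functions l)] (hfg : ∀ M ∈ K, FG L M) :
    Countable S.limit :=
  cg_iff_countable.1 (DirectLimit.cg _ fun n => (hfg _ (S.stage_mem n)).cg)

theorem age_limit (hfg : ∀ M ∈ K, FG L M) (hp : Hereditary K)
    (hρK : ∀ N ∈ K, ∃ n, Nonempty (ρ n ≃[L] N)) : L.age S.limit = K := by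
  refine (age_directLimit (fun n => S.stage n) S.chainMap).trans
    (subset_antisymm (Set.iUnion_subset fun n => hp _ (S.stage_mem n)) fun N hN => ?_)
  obtain ⟨n, ⟨eN⟩⟩ := hρK N hN
  exact Set.mem_iUnion_of_mem (n + 1)
    ⟨hfg N hN, ⟨(S.nonempty_embedding_stage_succ n).some.comp eN.symm.toEmbedding⟩⟩

theorem exists_comp_eq_limit (hfg : ∀ M ∈ K, FG L M)
    (hρK : ∀ N ∈ K, ∃ n, Nonempty (ρ n ≃[L] N)) {P Q : Bundled.{w} L.Structure} (hP : P ∈ K) (hQ : Q ∈ K) (e : P ↪[L] Q)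
    (f : P ↪[L] S.limit) : ∃ g : Q ↪[L] S.limit, g.comp e = f := by
  obtain ⟨n, f', rfl⟩ := DirectLimit.exists_comp_eq_of_fg (hfg P hP) f
  obtain ⟨i, ⟨eP⟩⟩ := hρK P hP
  obtain ⟨j, ⟨eQ⟩⟩ := hρK Q hQ
  obtain ⟨m, hnm, w, hw⟩ := S.exists_solution n
    ⟨i, j, eQ.symm.toEmbedding.comp (e.comp eP.toEmbedding), f'.comp eP.toEmbedding⟩
  refine ⟨(DirectLimit.of L ℕ _ S.chainMap m).comp (w.comp eQ.symm.toEmbedding),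
    Embedding.ext fun x => ?_⟩
  obtain ⟨y, rfl⟩ := eP.surjective x
  have hwy := Embedding.ext_iff.1 hw y
  simp only [Embedding.comp_apply, Equiv.coe_toEmbedding] at hwy ⊢
  rw [hwy, DirectLimit.of_f]

theorem isUltrahomogeneous_limit [Countable (Σ l, L.Functions l)] (hfg : ∀ M ∈ K, FG L M)
    (hp : Hereditary K) (hρK : ∀ N ∈ K, ∃ n, Nonempty (ρ n ≃[L] N)) :
    L.IsUltrahomogeneous S.limit := by
  have := S.countable_limit hfg
  refine isUltrahomogeneous_of_forall_extend cg_of_countable fun P Q hP hQ => ?_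
  rw [S.age_limit hfg hp hρK] at hP hQ
  exact S.exists_comp_eq_limit hfg hρK hP hQ

end ChainStrategy

theorem IsFraisse.exists_countable_ultrahomogeneous_age_eq [Countable (Σ l, L.Functions l)]
    {K : Set (Bundled.{w} L.Structure)} (h : IsFraisse K) :
    ∃ M : Bundled.{w} L.Structure, Countable M ∧ L.IsUltrahomogeneous M ∧ L.age M = K := by
  obtain ⟨ρ, hρ, hρK⟩ := exists_seq_forall_nonempty_equiv_of_countable_quotient h.is_nonempty
    h.is_essentially_countable (h.hereditary.is_equiv_invariant_of_fg h.FG)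
  obtain ⟨S⟩ := exists_chainStrategy h.FG h.jointEmbedding h.amalgamation hρ hρK
  exact ⟨Bundled.of S.limit, S.countable_limit h.FG,
    S.isUltrahomogeneous_limit h.FG h.hereditary hρK, S.age_limit h.FG h.hereditary hρK⟩

end FirstOrder.Language

theorem exists_countable_ultrahomogeneous_age_eq_iff_general
    {L : FirstOrder.Language.{u, v}} [Countable L.Symbols]
    (K : Set (CategoryTheory.Bundled.{w} L.Structure))
    (hfg : ∀ M : CategoryTheory.Bundled.{w} L.Structure, M ∈ K → Structure.FG L M) :
    (∃ M : CategoryTheory.Bundled.{w} L.Structure,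
        Countable M ∧ L.IsUltrahomogeneous M ∧ L.age M = K) ↔
      (K.Nonempty ∧ (Quotient.mk' '' K).Countable ∧
        Hereditary K ∧ JointEmbedding K ∧ Amalgamation K) := by
  constructor
  · rintro ⟨M, _, hM, rfl⟩
    obtain ⟨hn, -, hc, hp, jep, ap⟩ := hM.age_isFraisse
    exact ⟨hn, hc, hp, jep, ap⟩
  · rintro ⟨hn, hc, hp, jep, ap⟩
    exact IsFraisse.exists_countable_ultrahomogeneous_age_eq ⟨hn, hfg, hc, hp, jep, ap⟩

/-- **Fraïssé's theorem, part (ii), existence.** Let `L` be a first-order language with at most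
countably many symbols, and let `K` be a class of finitely generated `L`-structures closed under
isomorphism.  Then there is a countable ultrahomogeneous `L`-structure whose age is `K` if and
only if `K` is nonempty, has only countably many members up to isomorphism, is closed under
finitely generated substructures (hereditary property), and has the joint embedding and
amalgamation properties. -/
theorem exists_countable_ultrahomogeneous_age_eq_iff
    {L : FirstOrder.Language.{u, v}} [Countable L.Symbols]
    (K : Set (CategoryTheory.Bundled.{w} L.Structure))
    (hiso : ∀ M N : CategoryTheory.Bundled.{w} L.Structure,
      Nonempty (M ≃[L] N) → (M ∈ K ↔ N ∈ K))
    (hfg : ∀ M : CategoryTheory.Bundled.{w} L.Structure, M ∈ K → Structure.FG L M) :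
    (∃ M : CategoryTheory.Bundled.{w} L.Structure,
        Countable M ∧ L.IsUltrahomogeneous M ∧ L.age M = K) ↔
      (K.Nonempty ∧ (Quotient.mk' '' K).Countable ∧
        Hereditary K ∧ JointEmbedding K ∧ Amalgamation K) :=
  exists_countable_ultrahomogeneous_age_eq_iff_general K hfg
end

section
/- For any set X, there is no surjection from X onto ℕ if and only if there is no injection from ℕ into the power set of X. Equivalently: there exists an injection from ℕ into 𝒫(X) if and only if there exists a surjection from X onto ℕ. -/
universe u

/-- For any set `X`, there is no surjection from `X` onto `ℕ` if and only if there is no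
injection from `ℕ` into the power set of `X`.  Equivalently, there is an injection from `ℕ`
into `𝒫(X)` if and only if there is a surjection from `X` onto `ℕ`.  (That is, `|X| ∈ Δ₄` iff
`2^|X| ∈ Δ`.) -/
theorem not_exists_surjective_to_nat_iff_not_exists_injective_nat_to_powerset (X : Type u) :
    ((¬∃ f : X → ℕ, Function.Surjective f) ↔ ¬∃ g : ℕ → Set X, Function.Injective g) ∧
      ((∃ g : ℕ → Set X, Function.Injective g) ↔ ∃ f : X → ℕ, Function.Surjective f) := by
  have key : (∃ g : ℕ → Set X, Function.Injective g) ↔ ∃ f : X → ℕ, Function.Surjective f := by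
    constructor
    · rintro ⟨g, hg⟩
      have : Infinite (Set X) := Infinite.of_injective g hg
      have : Infinite X := by
        by_contra h
        have : Finite X := not_infinite_iff_finite.mp h
        have : Finite (Set X) := inferInstance
        exact absurd ‹Infinite (Set X)› (not_infinite_iff_finite.mpr this)
      let i := Infinite.natEmbedding X
      exact ⟨Function.invFun i, Function.invFun_surjective i.injective⟩
    · rintro ⟨f, hf⟩
      exact ⟨fun n => f ⁻¹' {n}, fun a b hab => by
        obtain ⟨x, hx⟩ := hf a
        have : x ∈ f ⁻¹' {a} := hx
        rw [show f ⁻¹' {a} = f ⁻¹' {b} from hab] at this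
        simpa [hx] using this⟩
  exact ⟨not_congr key.symm, key⟩
end

section
/- If X and Y are sets such that there is no surjection from X onto ℕ and no surjection from Y onto ℕ, then there is no surjection from the disjoint union X ⊔ Y onto ℕ. (Weakly Dedekind finite cardinals are closed under addition.) -/
universe u v

lemma surj_of_infinite_range {X : Type u} (g : X → ℕ) (h : (Set.range g).Infinite) :
    ∃ f : X → ℕ, Function.Surjective f := by
  haveI := h.to_subtype
  obtain ⟨e⟩ : Nonempty (Set.range g ≃ ℕ) := nonempty_equiv_of_countable
  refine ⟨fun x => e ⟨g x, Set.mem_range_self x⟩, fun n => ?_⟩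
  obtain ⟨⟨m, x, hx⟩, hm⟩ := e.surjective n
  exact ⟨x, by simp [hx, hm]⟩

/-- Weakly Dedekind finite cardinals are closed under addition: if there is no surjection from
`X` onto `ℕ` and no surjection from `Y` onto `ℕ`, then there is no surjection from the disjoint
union `X ⊔ Y` onto `ℕ`. -/
theorem not_exists_surjective_sum_to_nat (X : Type u) (Y : Type v)
    (hX : ¬∃ f : X → ℕ, Function.Surjective f) (hY : ¬∃ f : Y → ℕ, Function.Surjective f) :
    ¬∃ f : X ⊕ Y → ℕ, Function.Surjective f := by
  rintro ⟨f, hf⟩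
  have hunion : Set.range (f ∘ Sum.inl) ∪ Set.range (f ∘ Sum.inr) = Set.univ := by
    ext n
    simp only [Set.mem_union, Set.mem_range, Set.mem_univ, iff_true, Function.comp]
    obtain ⟨x | y, hx⟩ := hf n
    · exact Or.inl ⟨x, hx⟩
    · exact Or.inr ⟨y, hx⟩
  by_cases h1 : (Set.range (f ∘ Sum.inl)).Infinite
  · exact hX (surj_of_infinite_range _ h1)
  · have h2 : (Set.range (f ∘ Sum.inr)).Infinite := by
      intro h2
      have := (Set.not_infinite.mp h1).union h2
      rw [hunion] at this
      exact Set.infinite_univ this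
    exact hY (surj_of_infinite_range _ h2)
end

section
/- If X and Y are sets such that there is no surjection from X onto ℕ and no surjection from Y onto ℕ, then there is no surjection from the Cartesian product X × Y onto ℕ. (Weakly Dedekind finite cardinals are closed under multiplication.) -/
/-!
A type admits no surjection onto `ℕ` exactly when every `ℕ`-valued function on it is bounded.
So each row `y ↦ f (x, y)` of `f : X × Y → ℕ` has a maximum, the row maxima form a bounded
function on `X`, and their bound bounds `f`.
-/

universe u v

open Set Function

lemma exists_surjective_nat_of_infinite_range {α : Type*} {g : α → ℕ} (h : (range g).Infinite) :
    ∃ f : α → ℕ, Surjective f := by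
  have : Infinite (range g) := h.to_subtype
  obtain ⟨e⟩ := nonempty_equiv_of_countable (α := range g) (β := ℕ)
  exact ⟨e ∘ rangeFactorization g, e.surjective.comp rangeFactorization_surjective⟩

lemma bddAbove_range_of_not_exists_surjective {α : Type*} (h : ¬∃ f : α → ℕ, Surjective f)
    (g : α → ℕ) : BddAbove (range g) :=
  (not_infinite.mp fun hinf => h (exists_surjective_nat_of_infinite_range hinf)).bddAbove

/-- Weakly Dedekind finite cardinals are closed under multiplication: if there is no surjection
from `X` onto `ℕ` and no surjection from `Y` onto `ℕ`, then there is no surjection from the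
Cartesian product `X × Y` onto `ℕ`. -/
theorem not_exists_surjective_prod_to_nat (X : Type u) (Y : Type v)
    (hX : ¬∃ f : X → ℕ, Function.Surjective f) (hY : ¬∃ f : Y → ℕ, Function.Surjective f) :
    ¬∃ f : X × Y → ℕ, Function.Surjective f := by
  rintro ⟨f, hf⟩
  set rowMax : X → ℕ := fun x => sSup (range fun y => f (x, y))
  have le_rowMax (x : X) (y : Y) : f (x, y) ≤ rowMax x :=
    le_csSup (bddAbove_range_of_not_exists_surjective hY _) ⟨y, rfl⟩
  obtain ⟨N, hN⟩ := bddAbove_range_of_not_exists_surjective hX rowMax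
  have hbdd : BddAbove (range f) := ⟨N, by
    rintro _ ⟨⟨x, y⟩, rfl⟩
    exact (le_rowMax x y).trans (hN ⟨x, rfl⟩)⟩
  exact not_bddAbove_univ (hf.range_eq ▸ hbdd)
end

section
/- If a set X has MT-rank ≤ α for some ordinal α, then X is weakly Dedekind finite, i.e., there is no surjection from X onto ℕ. -/
universe u

/-- A set `X` has MT-rank `≤ α` if there is a positive integer `k` such that whenever `X` is
written as a disjoint union of `k + 1` subsets, at least one of them is empty or has
MT-rank `≤ β` for some ordinal `β < α`.  (Defined by transfinite recursion on `α`.) -/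
def MTRankLE : Ordinal.{u} → Type u → Prop :=
  Ordinal.lt_wf.fix (C := fun _ => Type u → Prop) fun α ih X =>
    ∃ k : ℕ, 0 < k ∧ ∀ P : Fin (k + 1) → Set X,
      Pairwise (Function.onFun Disjoint P) → (⋃ i, P i) = Set.univ →
        ∃ i, P i = ∅ ∨ ∃ β, ∃ h : β < α, ih β h ↥(P i)

theorem MTRankLE_iff (α : Ordinal.{u}) (X : Type u) :
    MTRankLE α X ↔ ∃ k : ℕ, 0 < k ∧ ∀ P : Fin (k + 1) → Set X,
      Pairwise (Function.onFun Disjoint P) → (⋃ i, P i) = Set.univ →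
        ∃ i, P i = ∅ ∨ ∃ β, β < α ∧ MTRankLE β ↥(P i) := by
  conv_lhs => rw [MTRankLE, Ordinal.lt_wf.fix_eq]
  simp only [MTRankLE, exists_prop]

/-- If a set `X` has MT-rank `≤ α` for some ordinal `α`, then `X` is weakly Dedekind finite:
there is no surjection from `X` onto `ℕ`. -/
theorem not_exists_surjective_to_nat_of_mtRankLE (X : Type u) (α : Ordinal.{u})
    (h : MTRankLE α X) :
    ¬∃ f : X → ℕ, Function.Surjective f := by
  induction α using Ordinal.induction generalizing X with
  | h α ih =>
    rintro ⟨f, hf⟩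
    rw [MTRankLE_iff] at h
    obtain ⟨k, hk, hP⟩ := h
    set P : Fin (k + 1) → Set X := fun i => {x | f x % (k + 1) = (i : ℕ)} with hPdef
    have hdisj : Pairwise (Function.onFun Disjoint P) := by
      intro i j hij
      refine Set.disjoint_left.2 fun x hxi hxj => hij ?_
      exact Fin.ext (hxi.symm.trans hxj)
    have hcover : (⋃ i, P i) = Set.univ := by
      ext x
      simp only [Set.mem_iUnion, Set.mem_univ, iff_true]
      exact ⟨⟨f x % (k + 1), Nat.mod_lt _ (Nat.succ_pos k)⟩, rfl⟩
    obtain ⟨i, hi⟩ := hP P hdisj hcover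
    -- P i is nonempty and surjects onto ℕ
    have hsurj : ∃ g : ↥(P i) → ℕ, Function.Surjective g := by
      refine ⟨fun x => f x / (k + 1), fun n => ?_⟩
      obtain ⟨x, hx⟩ := hf ((i : ℕ) + n * (k + 1))
      have hxi : x ∈ P i := by
        simp only [hPdef, Set.mem_setOf_eq, hx, Nat.add_mul_mod_self_right]
        exact Nat.mod_eq_of_lt i.isLt
      refine ⟨⟨x, hxi⟩, ?_⟩
      simp only [hx, Nat.add_mul_div_right _ _ (Nat.succ_pos k)]
      rw [Nat.div_eq_of_lt i.isLt, zero_add]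
    rcases hi with hempty | ⟨β, hβ, hβrank⟩
    · obtain ⟨g, hg⟩ := hsurj
      obtain ⟨x, -⟩ := hg 0
      rw [hempty] at x
      exact x.2
    · exact ih β hβ _ hβrank hsurj
end

section
/- If X is Dedekind finite and X ≡ Y, then Y is also Dedekind finite. -/
universe u v x y

/-- Sets `X` and `Y` are *equivalent* (`X ≡ Y`) if for every first-order language `L` with at
most countably many symbols, every `L`-structure with domain `X` is elementarily equivalent to
some `L`-structure with domain `Y`, and conversely every `L`-structure with domain `Y` is
elementarily equivalent to some `L`-structure with domain `X`. -/
def SetEquiv (X : Type x) (Y : Type y) : Prop :=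
  ∀ L : FirstOrder.Language.{u, v}, Countable L.Symbols →
    (∀ SX : L.Structure X, ∃ SY : L.Structure Y,
      @FirstOrder.Language.ElementarilyEquivalent L X Y SX SY) ∧
    (∀ SY : L.Structure Y, ∃ SX : L.Structure X,
      @FirstOrder.Language.ElementarilyEquivalent L X Y SX SY)

/-- The empty language at arbitrary universes. -/
def myEmptyLang : FirstOrder.Language.{u, v} :=
  ⟨fun _ => PEmpty, fun _ => PEmpty⟩

instance myEmptyLang_symbols_isEmpty : IsEmpty (myEmptyLang.{u, v}).Symbols := by
  constructor
  rintro ((⟨_, f⟩ | ⟨_, r⟩)) <;> exact PEmpty.elim ‹_›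

instance myEmptyStructure (M : Type*) : (myEmptyLang.{u, v}).Structure M :=
  ⟨fun f => f.elim, fun r => r.elim⟩

/-- If `X` is Dedekind finite (there is no injection from `ℕ` into `X`) and `X ≡ Y`, then
`Y` is also Dedekind finite. -/
theorem dedekind_finite_of_setEquiv (X : Type x) (Y : Type y)
    (hX : ¬∃ f : ℕ → X, Function.Injective f) (hXY : SetEquiv.{u, v} X Y) :
    ¬∃ f : ℕ → Y, Function.Injective f := by
  rintro ⟨f, hf⟩
  have hYinf : Infinite Y := Infinite.of_injective f hf
  obtain ⟨-, h2⟩ := hXY myEmptyLang.{u, v} inferInstance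
  obtain ⟨SX, hSX⟩ := h2 (myEmptyStructure Y)
  have hXinf : Infinite X := hSX.infinite_iff.mpr hYinf
  exact hX ⟨fun n => (Infinite.natEmbedding X) n, (Infinite.natEmbedding X).injective⟩
end

section
/- Any two infinite well-orderable sets are equivalent: if X and Y are infinite sets each admitting a well-ordering, then X ≡ Y. In particular, for every first-order language L with at most countably many symbols, every L-structure on X is elementarily equivalent to some L-structure on Y (by the upward and downward Löwenheim–Skolem theorems). -/
universe u v x y

open FirstOrder Cardinal in
lemma exists_elemEquiv_structure_aux {L : FirstOrder.Language.{u, v}}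
    (hL : Countable L.Symbols) (A : Type x) (B : Type y)
    (hA : Infinite A) (hB : Infinite B) (SA : L.Structure A) :
    ∃ SB : L.Structure B, @FirstOrder.Language.ElementarilyEquivalent L A B SA SB := by
  have h1 : (ℵ₀ : Cardinal.{y}) ≤ #B := Cardinal.aleph0_le_mk B
  have hcard : L.card ≤ ℵ₀ := by
    rw [FirstOrder.Language.card]
    exact Cardinal.mk_le_aleph0
  have h2 : Cardinal.lift.{y} L.card ≤ Cardinal.lift.{max u v} (#B : Cardinal.{y}) := by
    calc Cardinal.lift.{y} L.card ≤ Cardinal.lift.{y} ℵ₀ := Cardinal.lift_le.2 hcard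
    _ = ℵ₀ := by simp
    _ ≤ Cardinal.lift.{max u v} (#B) := by
        simpa using Cardinal.lift_le.2 h1
  obtain ⟨N, hN, hNcard⟩ :=
    L.exists_elementarilyEquivalent_card_eq A (#B) h1 h2
  obtain ⟨e⟩ : Nonempty (N ≃ B) := Cardinal.eq.1 hNcard
  letI SB : L.Structure B := e.inducedStructure
  have h2 : @FirstOrder.Language.ElementarilyEquivalent L N B _ SB :=
    FirstOrder.Language.StrongHomClass.elementarilyEquivalent (e.inducedStructureEquiv)
  exact ⟨SB, hN.trans h2⟩

/-- Any two infinite well-orderable sets are equivalent: if `X` and `Y` are infinite sets,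
each admitting a well-ordering, then `X ≡ Y`. -/
theorem setEquiv_of_infinite_wellOrderable (X : Type x) (Y : Type y)
    (hX : Infinite X) (hY : Infinite Y)
    (wX : ∃ r : X → X → Prop, IsWellOrder X r)
    (wY : ∃ s : Y → Y → Prop, IsWellOrder Y s) :
    SetEquiv.{u, v} X Y := by
  intro L hL
  constructor
  · exact fun SX => exists_elemEquiv_structure_aux hL X Y hX hY SX
  · intro SY
    obtain ⟨SX, h⟩ := exists_elemEquiv_structure_aux hL Y X hY hX SY
    exact ⟨SX, h.symm⟩
end
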